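/- arXiv:1506.02713 — 4 statements merged into one kernel-verified Lean document; each statement's English description precedes it below -/
import Mathlib

section
/- For q a prime power and d ≥ n ≥ 1, m ≥ 1, the quantities P(d) = q^{dm} − q^{(d−n)m+1} (for d > n, with P(j) = q^{jm} for 0 ≤ j < n and P(n) = q^{nm} − q) satisfy the recursion P(d) = q^{dm} − Σ_{k≥1} P(d−kn)·q^k, where the sum runs over k with d − kn ≥ 0. -/
/-!
Write `S d` for the sum `∑_{k ≥ 1, kn ≤ d} P (d - kn) q^k`. It vanishes for `d < n`, and for
`d ≥ n` splitting off the term `k = 1` gives `S d = q (P (d - n) + S (d - n))`. Hence the recursion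
`P d + S d = q^{dm}` propagates by strong induction on `d`: the correction term `q^{(d-n)m+1}` in
`P d` is exactly `q · q^{(d-n)m} = S d`.
-/

open Finset

section
variable {R : Type*} [CommRing R]

def strideSum (n : ℕ) (q : R) (f : ℕ → R) (d : ℕ) : R :=
  ∑ k ∈ Icc 1 (d / n), f (d - k * n) * q ^ k

theorem strideSum_of_lt {n d : ℕ} (q : R) (f : ℕ → R) (h : d < n) : strideSum n q f d = 0 := by
  simp [strideSum, Nat.div_eq_of_lt h]

theorem strideSum_of_le {n d : ℕ} (q : R) (f : ℕ → R) (hn : 0 < n) (h : n ≤ d) :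
    strideSum n q f d = q * (f (d - n) + strideSum n q f (d - n)) := by
  rw [strideSum, strideSum, Nat.div_eq_sub_div hn h, ← Ico_add_one_right_eq_Icc,
    ← Ico_add_one_right_eq_Icc, sum_Ico_eq_sum_range, sum_Ico_eq_sum_range, Nat.add_sub_cancel,
    Nat.add_sub_cancel, sum_range_succ', mul_add, mul_sum, add_comm]
  congr 1
  · simp [mul_comm]
  · refine sum_congr rfl fun k _ => ?_
    rw [Nat.sub_sub, show n + (1 + k) * n = (1 + (k + 1)) * n by ring, ← add_assoc, pow_succ]
    ring

theorem add_strideSum_eq_pow {n : ℕ} (hn : 0 < n) (m : ℕ) (q : R) {P : ℕ → R}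
    (hP : ∀ j, P j = if j < n then q ^ (j * m) else q ^ (j * m) - q ^ ((j - n) * m + 1))
    (d : ℕ) : P d + strideSum n q P d = q ^ (d * m) := by
  induction d using Nat.strong_induction_on with
  | _ d ih =>
    rcases lt_or_ge d n with h | h
    · rw [strideSum_of_lt q P h, hP, if_pos h, add_zero]
    · rw [strideSum_of_le q P hn h, ih (d - n) (Nat.sub_lt (hn.trans_le h) hn), hP,
        if_neg h.not_gt, ← pow_succ', sub_add_cancel]

end

theorem stmt_3_general (q m n d : ℕ)
    (hn : 1 ≤ n)
    (P : ℕ → ℤ)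
    (hP : ∀ j : ℕ, P j = if j < n then (q : ℤ) ^ (j * m)
      else (q : ℤ) ^ (j * m) - (q : ℤ) ^ ((j - n) * m + 1)) :
    P d = (q : ℤ) ^ (d * m) - ∑ k ∈ Finset.Icc 1 (d / n), P (d - k * n) * (q : ℤ) ^ k :=
  eq_sub_of_add_eq (add_strideSum_eq_pow hn m (q : ℤ) hP d)

theorem stmt_3 (q m n d : ℕ) (hq : ∃ p k : ℕ, p.Prime ∧ q = p ^ k ∧ 1 ≤ k)
    (hn : 1 ≤ n) (hm : 1 ≤ m) (hd : n < d)
    (P : ℕ → ℤ)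
    (hP : ∀ j : ℕ, P j = if j < n then (q : ℤ) ^ (j * m)
      else (q : ℤ) ^ (j * m) - (q : ℤ) ^ ((j - n) * m + 1)) :
    P d = (q : ℤ) ^ (d * m) - ∑ k ∈ Finset.Icc 1 (d / n), P (d - k * n) * (q : ℤ) ^ k :=
  stmt_3_general q m n d hn P hP
end

section
/- For a finite field F_q and d ≥ n+1 ≥ 2, |Rat*_{d,n}(F_q)| = |Poly_{n+1}^{d(n+1),1}(F_q)|; that is, the number of (n+1)-tuples of monic degree-d polynomials over F_q with no common root in F_q-bar equals the number of monic polynomials of degree d(n+1) over F_q with no root of multiplicity ≥ n+1. -/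
/-!
Both sides satisfy the same recursion in the degree. Pulling the monic gcd `g` (of degree `e`)
out of an `(n+1)`-tuple of monic degree-`d` polynomials leaves a coprime tuple of degree `d - e`;
pulling the largest `h ^ (n+1)` (with `h` monic of degree `e`) out of a monic polynomial of degree
`d(n+1)` leaves an `(n+1)`-power-free one of degree `(d - e)(n+1)`. Both factorizations are unique,
so with `q = |F|`, the number `N(m)` of coprime tuples of degree `m` and the number `N(m)` of
power-free polynomials of degree `m(n+1)` both satisfy `∑_{e ≤ d} q^e N(d - e) = q^{d(n+1)}`, a
recursion that determines `N` since its `e = 0` coefficient is `1`. Over the algebraic closure, a common root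
is a common irreducible factor, i.e. a nontrivial gcd; and since `F` is perfect, irreducible
polynomials have simple roots, so a root of multiplicity `≥ n+1` is an irreducible factor of
multiplicity `≥ n+1`.
-/

open Polynomial

section PowerFree

variable {α : Type*}

def PowerFree [Monoid α] (k : ℕ) (a : α) : Prop :=
  ∀ p : α, Irreducible p → ¬ p ^ k ∣ a

variable [CommMonoidWithZero α]

theorem exists_powerFree_mul_pow [StrongNormalizationMonoid α] [WfDvdMonoid α] {k : ℕ}
    (hk : k ≠ 0) {a : α} (ha : a ≠ 0) :
    ∃ b h : α, PowerFree k b ∧ normalize h = h ∧ a = b * h ^ k := by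
  induction a using (wellFounded_dvdNotUnit (α := α)).induction with | h a ih =>
  by_cases hfree : PowerFree k a
  · exact ⟨a, 1, hfree, normalize_one, by rw [one_pow, mul_one]⟩
  obtain ⟨p, hp, hpa⟩ : ∃ p, Irreducible p ∧ p ^ k ∣ a := by simpa [PowerFree] using hfree
  obtain ⟨a', rfl⟩ := (associated_normalize p).pow_pow.symm.dvd.trans hpa
  have ha' : a' ≠ 0 := right_ne_zero_of_mul ha
  have hlt : DvdNotUnit a' (normalize p ^ k * a') :=
    ⟨ha', _, (isUnit_pow_iff hk).not.2 ((associated_normalize p).irreducible hp).not_isUnit,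
      mul_comm _ _⟩
  obtain ⟨b, h, hb, hh, rfl⟩ := ih a' hlt ha'
  exact ⟨b, normalize p * h, hb, by rw [normalize_mul, normalize_idem, hh],
    by rw [mul_pow, mul_left_comm]⟩

theorem PowerFree.associated_of_mul_pow_eq [UniqueFactorizationMonoid α] {k : ℕ} {b₁ b₂ : α}
    (hb₁ : PowerFree k b₁) (hb₂ : PowerFree k b₂) {h₁ h₂ : α} (hh₁ : h₁ ≠ 0) (hh₂ : h₂ ≠ 0)
    (h : b₁ * h₁ ^ k = b₂ * h₂ ^ k) : Associated h₁ h₂ := by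
  induction h₁ using UniqueFactorizationMonoid.induction_on_prime generalizing h₂ with
  | h₁ => exact absurd rfl hh₁
  | h₂ u hu =>
    refine (associated_one_iff_isUnit.2 hu).trans (associated_one_iff_isUnit.2 ?_).symm
    by_contra hh₂u
    obtain ⟨p, hp, hph₂⟩ := WfDvdMonoid.exists_irreducible_factor hh₂u hh₂
    refine hb₁ p hp ((hu.pow k).dvd_mul_right.1 ?_)
    exact h ▸ dvd_mul_of_dvd_right (pow_dvd_pow_of_dvd hph₂ k) b₂
  | h₃ a p ha hp ih =>
    have hph₂ : p ∣ h₂ := by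
      by_contra hnd
      refine hb₂ p hp.irreducible (hp.pow_dvd_of_dvd_mul_right k
        (fun hd : p ∣ h₂ ^ k => hnd (hp.dvd_of_dvd_pow hd)) ?_)
      exact h ▸ dvd_mul_of_dvd_right (pow_dvd_pow_of_dvd (dvd_mul_right p a) k) b₁
    obtain ⟨c, rfl⟩ := hph₂
    have hc : c ≠ 0 := right_ne_zero_of_mul hh₂
    refine (ih ha hc ?_).mul_left p
    apply mul_left_cancel₀ (pow_ne_zero k hp.ne_zero)
    rw [mul_pow, mul_pow] at h
    rw [mul_left_comm, h, mul_left_comm]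

end PowerFree

theorem eq_of_forall_sum_range_mul_eq {a x y : ℕ → ℕ} (ha : a 0 ≠ 0)
    (h : ∀ d, ∑ e ∈ Finset.range (d + 1), a e * x (d - e) =
      ∑ e ∈ Finset.range (d + 1), a e * y (d - e)) : x = y := by
  funext d
  induction d using Nat.strong_induction_on with
  | _ d ih =>
  have hd := h d
  have htail : ∑ e ∈ Finset.range d, a (e + 1) * x (d - (e + 1)) =
      ∑ e ∈ Finset.range d, a (e + 1) * y (d - (e + 1)) :=
    Finset.sum_congr rfl fun e he => by rw [ih _ (by simp at he; omega)]
  rw [Finset.sum_range_succ', Finset.sum_range_succ', htail] at hd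
  exact Nat.eq_of_mul_eq_mul_left (Nat.pos_of_ne_zero ha) (Nat.add_left_cancel hd)

namespace Polynomial

section Roots

variable {F K : Type*} [Field F] [Field K] [Algebra F K]

theorem X_sub_C_dvd_map_iff_minpoly_dvd (α : K) {f : F[X]} :
    X - C α ∣ f.map (algebraMap F K) ↔ minpoly F α ∣ f := by
  rw [dvd_iff_isRoot, IsRoot.def, eval_map_algebraMap]
  exact ⟨minpoly.dvd F α, fun ⟨g, hg⟩ => by rw [hg, map_mul, minpoly.aeval, zero_mul]⟩

theorem minpoly_pow_dvd_of_pow_X_sub_C_dvd_map {α : K} (hsep : (minpoly F α).Separable) {k : ℕ}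
    {f : F[X]} (hf : f ≠ 0) (h : (X - C α) ^ k ∣ f.map (algebraMap F K)) :
    minpoly F α ^ k ∣ f := by
  classical
  have hint : IsIntegral F α := minpoly.ne_zero_iff.1 hsep.ne_zero
  obtain ⟨e, g, hpg, rfl⟩ := WfDvdMonoid.max_power_factor hf (minpoly.irreducible hint)
  refine (pow_dvd_pow _ ?_).trans (dvd_mul_right _ _)
  set P := (minpoly F α).map (algebraMap F K)
  set G := g.map (algebraMap F K)
  have hPG : P ^ e * G ≠ 0 := by
    simpa only [Polynomial.map_mul, Polynomial.map_pow] using Polynomial.map_ne_zero hf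
  have hG : G.roots.count α = 0 :=
    Multiset.count_eq_zero.2 fun hα => hpg ((X_sub_C_dvd_map_iff_minpoly_dvd α).1
      (dvd_iff_isRoot.2 ((mem_roots (right_ne_zero_of_mul hPG)).1 hα)))
  rw [Polynomial.map_mul, Polynomial.map_pow] at h
  calc k ≤ rootMultiplicity α (P ^ e * G) := (le_rootMultiplicity_iff hPG).2 h
    _ = e * P.roots.count α + G.roots.count α := by
        rw [← count_roots, roots_mul hPG, roots_pow, Multiset.count_add, Multiset.count_nsmul]
    _ ≤ e * 1 + 0 := by rw [hG]; gcongr; exact count_roots_le_one hsep.map α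
    _ = e := by ring

variable (K) [IsAlgClosed K]

theorem exists_common_root_iff_gcd_ne_one [DecidableEq F] {ι : Type*} [Fintype ι]
    {f : ι → F[X]} (h0 : Finset.univ.gcd f ≠ 0) :
    (∃ α : K, ∀ i, X - C α ∣ (f i).map (algebraMap F K)) ↔ Finset.univ.gcd f ≠ 1 := by
  simp only [X_sub_C_dvd_map_iff_minpoly_dvd]
  rw [Ne, ← Finset.normalize_gcd, normalize_eq_one]
  constructor
  · rintro ⟨α, hα⟩ hunit
    exact minpoly.not_isUnit F α (isUnit_of_dvd_unit (Finset.dvd_gcd fun i _ => hα i) hunit)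
  · intro hunit
    obtain ⟨p, hp, hpf⟩ := WfDvdMonoid.exists_irreducible_factor hunit h0
    obtain ⟨α, hα⟩ := IsAlgClosed.exists_aeval_eq_zero K p (degree_pos_of_irreducible hp).ne'
    exact ⟨α, fun i =>
      (minpoly.dvd F α hα).trans (hpf.trans (Finset.gcd_dvd (Finset.mem_univ i)))⟩

theorem exists_pow_X_sub_C_dvd_map_iff [PerfectField F] {k : ℕ} (hk : k ≠ 0) {f : F[X]}
    (hf : f ≠ 0) :
    (∃ α : K, (X - C α) ^ k ∣ f.map (algebraMap F K)) ↔ ¬ PowerFree k f := by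
  constructor
  · rintro ⟨α, hα⟩ hfree
    have hdvd : minpoly F α ∣ f :=
      (X_sub_C_dvd_map_iff_minpoly_dvd α).1 ((dvd_pow_self _ hk).trans hα)
    have hirr : Irreducible (minpoly F α) :=
      minpoly.irreducible (minpoly.ne_zero_iff.1 (ne_zero_of_dvd_ne_zero hf hdvd))
    exact hfree _ hirr (minpoly_pow_dvd_of_pow_X_sub_C_dvd_map
      (PerfectField.separable_of_irreducible hirr) hf hα)
  · intro hfree
    obtain ⟨p, hp, hpf⟩ : ∃ p, Irreducible p ∧ p ^ k ∣ f := by simpa [PowerFree] using hfree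
    obtain ⟨α, hα⟩ := IsAlgClosed.exists_aeval_eq_zero K p (degree_pos_of_irreducible hp).ne'
    have hroot : X - C α ∣ p.map (algebraMap F K) :=
      (X_sub_C_dvd_map_iff_minpoly_dvd α).2 (minpoly.dvd F α hα)
    refine ⟨α, (pow_dvd_pow_of_dvd hroot k).trans ?_⟩
    rw [← Polynomial.map_pow]
    exact Polynomial.map_dvd _ hpf

end Roots

section Counting

def monicsOfDegree (R : Type*) [Semiring R] (e : ℕ) : Set R[X] :=
  {p | p.Monic ∧ p.natDegree = e}

theorem mul_mem_monicsOfDegree {R : Type*} [Semiring R] {a b : ℕ} {p q : R[X]}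
    (hp : p ∈ monicsOfDegree R a) (hq : q ∈ monicsOfDegree R b) :
    p * q ∈ monicsOfDegree R (a + b) :=
  ⟨hp.1.mul hq.1, by rw [hp.1.natDegree_mul hq.1, hp.2, hq.2]⟩

theorem pow_mem_monicsOfDegree {R : Type*} [Semiring R] {a : ℕ} {p : R[X]}
    (hp : p ∈ monicsOfDegree R a) (k : ℕ) : p ^ k ∈ monicsOfDegree R (a * k) :=
  ⟨hp.1.pow k, by rw [hp.1.natDegree_pow, hp.2, mul_comm]⟩

variable {F : Type*} [Field F]

noncomputable def monicsOfDegreeEquiv (e : ℕ) : monicsOfDegree F e ≃ (Fin e → F) :=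
  (monicEquivDegreeLT e).trans (degreeLTEquiv F e).toEquiv

instance [Finite F] (e : ℕ) : Finite (monicsOfDegree F e) :=
  .of_equiv _ (monicsOfDegreeEquiv e).symm

theorem card_monicsOfDegree [Finite F] (e : ℕ) :
    Nat.card (monicsOfDegree F e) = Nat.card F ^ e := by
  rw [Nat.card_congr (monicsOfDegreeEquiv e), Nat.card_fun, Nat.card_fin]

theorem card_univ_pi_monicsOfDegree [Finite F] (ι : Type*) [Fintype ι] (d : ℕ) :
    Nat.card (Set.univ.pi fun _ : ι => monicsOfDegree F d) =
      Nat.card F ^ (d * Fintype.card ι) := by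
  rw [Nat.card_congr (Equiv.Set.univPi _), Nat.card_pi, Finset.prod_const, card_monicsOfDegree,
    Finset.card_univ, ← pow_mul]

theorem monic_gcd {ι : Type*} [Fintype ι] [Nonempty ι] [DecidableEq F] {f : ι → F[X]}
    (hf : ∀ i, (f i).Monic) : (Finset.univ.gcd f).Monic := by
  have h0 : Finset.univ.gcd f ≠ 0 := fun h0 =>
    (hf (Classical.arbitrary ι)).ne_zero (Finset.gcd_eq_zero_iff.1 h0 _ (Finset.mem_univ _))
  rw [← Finset.normalize_gcd]
  exact monic_normalize h0

section Coprime

variable (F) (ι : Type*) [Fintype ι] [DecidableEq F]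

def coprimeMonicTuples (d : ℕ) : Set (ι → F[X]) :=
  {f ∈ Set.univ.pi fun _ => monicsOfDegree F d | Finset.univ.gcd f = 1}

variable {F ι}

instance [Finite F] (d : ℕ) : Finite (coprimeMonicTuples F ι d) :=
  have : Finite (Set.univ.pi fun _ : ι => monicsOfDegree F d) :=
    .of_equiv _ (Equiv.Set.univPi _).symm
  Finite.Set.subset _ (Set.sep_subset _ _)

-- `(e, g, c) ↦ g • c`, inverted by `Finset.extract_gcd`.
noncomputable def gcdMulEquiv [Nonempty ι] (d : ℕ) :
    (Σ e : Fin (d + 1), monicsOfDegree F e × coprimeMonicTuples F ι (d - e)) ≃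
      Set.univ.pi fun _ : ι => monicsOfDegree F d := by
  refine .ofBijective (fun x => ⟨fun i => x.2.1 * x.2.2.1 i, fun i _ => ?_⟩) ⟨?_, ?_⟩
  · have hmem := mul_mem_monicsOfDegree x.2.1.2 (x.2.2.2.1 i (Set.mem_univ i))
    rwa [Nat.add_sub_cancel' x.1.is_le] at hmem
  · rintro ⟨e₁, ⟨g₁, hg₁⟩, ⟨c₁, hc₁, hc₁1⟩⟩ ⟨e₂, ⟨g₂, hg₂⟩, ⟨c₂, hc₂, hc₂1⟩⟩ h
    have hfun : (fun i => g₁ * c₁ i) = fun i => g₂ * c₂ i := congrArg Subtype.val h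
    obtain rfl : g₁ = g₂ := by
      have hgcd := congrArg (Finset.univ.gcd ·) hfun
      simpa only [Finset.gcd_mul_left, hc₁1, hc₂1, mul_one, hg₁.1.normalize_eq_self,
        hg₂.1.normalize_eq_self] using hgcd
    obtain rfl : c₁ = c₂ := by ext1 i; exact mul_left_cancel₀ hg₁.1.ne_zero (congrFun hfun i)
    obtain rfl : e₁ = e₂ := Fin.ext (hg₁.2.symm.trans hg₂.2)
    rfl
  · rintro ⟨f, hf⟩
    simp only [Set.mem_univ_pi] at hf
    obtain ⟨c, hfc, hc⟩ := Finset.extract_gcd f Finset.univ_nonempty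
    set g := Finset.univ.gcd f
    have hg : g.Monic := monic_gcd fun i => (hf i).1
    have hcm : ∀ i, (c i).Monic := fun i =>
      hg.of_mul_monic_left (hfc i (Finset.mem_univ i) ▸ (hf i).1)
    have hdeg : ∀ i, g.natDegree + (c i).natDegree = d := fun i => by
      rw [← hg.natDegree_mul (hcm i), ← hfc i (Finset.mem_univ i), (hf i).2]
    refine ⟨⟨⟨g.natDegree, by have := hdeg (Classical.arbitrary ι); omega⟩, ⟨g, hg, rfl⟩,
      ⟨c, fun i _ => ⟨hcm i, by have := hdeg i; simp only; omega⟩, hc⟩⟩, ?_⟩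
    exact Subtype.ext (by ext1 i; exact (hfc i (Finset.mem_univ i)).symm)

theorem sum_card_coprimeMonicTuples [Finite F] [Nonempty ι] (d : ℕ) :
    ∑ e ∈ Finset.range (d + 1), Nat.card F ^ e * Nat.card (coprimeMonicTuples F ι (d - e)) =
      Nat.card F ^ (d * Fintype.card ι) := by
  rw [← card_univ_pi_monicsOfDegree, ← Nat.card_congr (gcdMulEquiv d), Nat.card_sigma,
    ← Fin.sum_univ_eq_sum_range]
  simp only [Nat.card_prod, card_monicsOfDegree]

end Coprime

section PowerFreeMonics

variable (F) in
def powerFreeMonics (k D : ℕ) : Set F[X] :=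
  {f ∈ monicsOfDegree F D | PowerFree k f}

instance [Finite F] (k D : ℕ) : Finite (powerFreeMonics F k D) :=
  Finite.Set.subset _ (Set.sep_subset _ _)

-- `(e, h, b) ↦ b * h ^ k`, inverted by `exists_powerFree_mul_pow`.
noncomputable def powerFreeMulPowEquiv {k : ℕ} (hk : k ≠ 0) (d : ℕ) :
    (Σ e : Fin (d + 1), monicsOfDegree F e × powerFreeMonics F k ((d - e) * k)) ≃
      monicsOfDegree F (d * k) := by
  refine .ofBijective (fun x => ⟨x.2.2.1 * x.2.1.1 ^ k, ?_⟩) ⟨?_, ?_⟩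
  · have hmem := mul_mem_monicsOfDegree x.2.2.2.1 (pow_mem_monicsOfDegree x.2.1.2 k)
    rwa [← Nat.add_mul, Nat.sub_add_cancel x.1.is_le] at hmem
  · rintro ⟨e₁, ⟨h₁, hh₁⟩, ⟨b₁, hb₁, hb₁free⟩⟩ ⟨e₂, ⟨h₂, hh₂⟩, ⟨b₂, hb₂, hb₂free⟩⟩ h
    have heq : b₁ * h₁ ^ k = b₂ * h₂ ^ k := congrArg Subtype.val h
    obtain rfl : h₁ = h₂ := eq_of_monic_of_associated hh₁.1 hh₂.1
      (hb₁free.associated_of_mul_pow_eq hb₂free hh₁.1.ne_zero hh₂.1.ne_zero heq)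
    obtain rfl : b₁ = b₂ := mul_right_cancel₀ (pow_ne_zero k hh₁.1.ne_zero) heq
    obtain rfl : e₁ = e₂ := Fin.ext (hh₁.2.symm.trans hh₂.2)
    rfl
  · classical
    rintro ⟨f, hf⟩
    obtain ⟨b, h, hb, hh, rfl⟩ := exists_powerFree_mul_pow hk hf.1.ne_zero
    have hh0 : h ≠ 0 := by rintro rfl; exact hf.1.ne_zero (by rw [zero_pow hk, mul_zero])
    have hhm : h.Monic := (normalize_eq_self_iff_monic hh0).1 hh
    have hbm : b.Monic := (hhm.pow k).of_mul_monic_right hf.1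
    have hdeg : b.natDegree + h.natDegree * k = d * k := by
      rw [← hf.2, hbm.natDegree_mul (hhm.pow k), hhm.natDegree_pow, mul_comm k]
    have hle : h.natDegree ≤ d := Nat.le_of_mul_le_mul_right (by omega) (Nat.pos_of_ne_zero hk)
    refine ⟨⟨⟨h.natDegree, by omega⟩, ⟨h, hhm, rfl⟩, ⟨b, ⟨hbm, ?_⟩, hb⟩⟩, rfl⟩
    rw [Fin.val_mk, Nat.sub_mul]
    omega

theorem sum_card_powerFreeMonics [Finite F] {k : ℕ} (hk : k ≠ 0) (d : ℕ) :
    ∑ e ∈ Finset.range (d + 1), Nat.card F ^ e * Nat.card (powerFreeMonics F k ((d - e) * k)) =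
      Nat.card F ^ (d * k) := by
  rw [← card_monicsOfDegree, ← Nat.card_congr (powerFreeMulPowEquiv hk d), Nat.card_sigma,
    ← Fin.sum_univ_eq_sum_range]
  simp only [Nat.card_prod, card_monicsOfDegree]

end PowerFreeMonics

theorem card_coprimeMonicTuples_eq_card_powerFreeMonics [Finite F] [DecidableEq F] {ι : Type*}
    [Fintype ι] [Nonempty ι] (d : ℕ) : Nat.card (coprimeMonicTuples F ι d) =
      Nat.card (powerFreeMonics F (Fintype.card ι) (d * Fintype.card ι)) := by
  have hrec := eq_of_forall_sum_range_mul_eq (a := (Nat.card F ^ ·))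
    (x := fun m => Nat.card (coprimeMonicTuples F ι m))
    (y := fun m => Nat.card (powerFreeMonics F (Fintype.card ι) (m * Fintype.card ι)))
    (by simp) fun d => (sum_card_coprimeMonicTuples d).trans
      (sum_card_powerFreeMonics Fintype.card_ne_zero d).symm
  exact congrFun hrec d

end Counting

end Polynomial

theorem stmt_6_general (F : Type) [Field F] [Fintype F] (d n : ℕ) :
    Nat.card {f : Fin (n + 1) → Polynomial F //
      (∀ i, (f i).Monic ∧ (f i).natDegree = d) ∧
      ¬ ∃ α : AlgebraicClosure F, ∀ i,
        (X - C α) ∣ (f i).map (algebraMap F (AlgebraicClosure F))} =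
    Nat.card {f : Polynomial F // f.Monic ∧ f.natDegree = d * (n + 1) ∧
      ¬ ∃ α : AlgebraicClosure F,
        (X - C α) ^ (n + 1) ∣ f.map (algebraMap F (AlgebraicClosure F))} := by
  classical
  have hcount := card_coprimeMonicTuples_eq_card_powerFreeMonics (F := F) (ι := Fin (n + 1)) d
  rw [Fintype.card_fin] at hcount
  convert hcount using 1 <;> refine Nat.card_congr (Equiv.subtypeEquivRight fun f => ?_)
  · simp only [coprimeMonicTuples, monicsOfDegree, Set.mem_ofPred_eq, Set.mem_univ_pi]
    refine and_congr_right fun hf => ?_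
    rw [exists_common_root_iff_gcd_ne_one _ (monic_gcd fun i => (hf i).1).ne_zero, not_not]
  · simp only [powerFreeMonics, monicsOfDegree, Set.mem_ofPred_eq, and_assoc]
    refine and_congr_right fun hf => and_congr_right fun _ => ?_
    rw [exists_pow_X_sub_C_dvd_map_iff _ n.succ_ne_zero hf.ne_zero, not_not]

theorem stmt_6 (F : Type) [Field F] [Fintype F] (d n : ℕ) (hn : 1 ≤ n) (hd : n + 1 ≤ d) :
    Nat.card {f : Fin (n + 1) → Polynomial F //
      (∀ i, (f i).Monic ∧ (f i).natDegree = d) ∧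
      ¬ ∃ α : AlgebraicClosure F, ∀ i,
        (X - C α) ∣ (f i).map (algebraMap F (AlgebraicClosure F))} =
    Nat.card {f : Polynomial F // f.Monic ∧ f.natDegree = d * (n + 1) ∧
      ¬ ∃ α : AlgebraicClosure F,
        (X - C α) ^ (n + 1) ∣ f.map (algebraMap F (AlgebraicClosure F))} :=
  stmt_6_general F d n
end

section
/- For d ≥ n ≥ 1 and m ≥ 1 and a finite field F_q, the number of m-tuples of monic degree-d polynomials (f_1,...,f_m) over F_q for which there exists a monic h ∈ F_q[z] with deg h ≥ 1 and h^n dividing every f_i equals q^{(d−n)m+1}. -/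
/-!
Every tuple `f` of monic polynomials factors uniquely as `f = h ^ n • g` with `h` monic and `g`
without a common monic `n`-th power factor of positive degree: existence by descent on the
degree, uniqueness because after cancelling `gcd h₁ h₂` the coprime cofactors `a, b` satisfy
`a ^ n ∣ g₂`, `b ^ n ∣ g₁`, forcing them to be units. The tuple `f` has a common `n`-th power
factor exactly when `deg h ≥ 1`. Writing such an `h` as `h' * X + c`, the pairs `(c, h' ^ n • g)`
run bijectively over `F` times the monic tuples of degree `d - n`, which gives `q * q ^ ((d - n) m)`.
-/

open Polynomial

namespace Polynomial

section DivX

variable {R : Type*} [CommRing R] {p : R[X]}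

lemma divX_mul_X_add_C (p : R[X]) (c : R) : divX (p * X + C c) = p := by
  ext k
  simp [coeff_divX]

lemma Monic.divX (hp : p.Monic) (hdeg : 0 < p.natDegree) : p.divX.Monic := by
  unfold Monic Polynomial.leadingCoeff
  rw [natDegree_divX_eq_natDegree_tsub_one, coeff_divX, Nat.sub_add_cancel hdeg]
  exact hp

variable [Nontrivial R]

lemma natDegree_mul_X_add_C (hp : p ≠ 0) (c : R) :
    (p * X + C c).natDegree = p.natDegree + 1 := by
  rw [natDegree_add_C, natDegree_mul_X hp]

lemma Monic.mul_X_add_C (hp : p.Monic) (c : R) : (p * X + C c).Monic :=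
  (hp.mul monic_X).add_of_left <| degree_lt_degree <| by
    rw [natDegree_C, natDegree_mul_X hp.ne_zero]
    exact Nat.succ_pos _

end DivX

end Polynomial

section CommonPowFactor

variable {F ι : Type*} [Field F] {n e : ℕ}

def HasCommonPowFactor (n : ℕ) (f : ι → F[X]) : Prop :=
  ∃ h : F[X], h.Monic ∧ 1 ≤ h.natDegree ∧ ∀ i, h ^ n ∣ f i

lemma isUnit_of_forall_pow_dvd {g : ι → F[X]} (hg : ¬HasCommonPowFactor n g) {a : F[X]}
    (ha : a ≠ 0) (hdvd : ∀ i, a ^ n ∣ g i) : IsUnit a := by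
  classical
  have hmon : (normalize a).Monic := monic_normalize ha
  by_contra hu
  refine hg ⟨normalize a, hmon, ?_, fun i ↦
    (pow_dvd_pow_of_dvd (normalize_associated a).dvd n).trans (hdvd i)⟩
  rwa [Nat.one_le_iff_ne_zero, Ne, hmon.natDegree_eq_zero, normalize_eq_one]

lemma exists_eq_monic_pow_mul (hn : n ≠ 0) (i₀ : ι) (f : ι → F[X]) (hf : f i₀ ≠ 0) :
    ∃ (h : F[X]) (g : ι → F[X]), h.Monic ∧ ¬HasCommonPowFactor n g ∧ ∀ i, f i = h ^ n * g i := by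
  induction hN : (f i₀).natDegree using Nat.strong_induction_on generalizing f with
  | _ N ih =>
    by_cases hcommon : HasCommonPowFactor n f
    · obtain ⟨p, hp, hpdeg, hdvd⟩ := hcommon
      choose g' hg' using hdvd
      have hpn : p ^ n ≠ 0 := pow_ne_zero n hp.ne_zero
      have hg'0 : g' i₀ ≠ 0 := right_ne_zero_of_mul (hg' i₀ ▸ hf)
      have hdeg : (f i₀).natDegree = n * p.natDegree + (g' i₀).natDegree := by
        rw [hg' i₀, natDegree_mul hpn hg'0, natDegree_pow]
      have hlt : (g' i₀).natDegree < N := by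
        have : 0 < n * p.natDegree := Nat.mul_pos (Nat.pos_of_ne_zero hn) hpdeg
        omega
      obtain ⟨h, g, hh, hg, hfg⟩ := ih _ hlt g' hg'0 rfl
      exact ⟨p * h, g, hp.mul hh, hg, fun i ↦ by rw [hg' i, hfg i, mul_pow, mul_assoc]⟩
    · exact ⟨1, f, monic_one, hcommon, fun i ↦ by rw [one_pow, one_mul]⟩

lemma eq_of_forall_pow_mul_eq {h₁ h₂ : F[X]} {g₁ g₂ : ι → F[X]} (hh₁ : h₁.Monic)
    (hh₂ : h₂.Monic) (hg₁ : ¬HasCommonPowFactor n g₁) (hg₂ : ¬HasCommonPowFactor n g₂)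
    (heq : ∀ i, h₁ ^ n * g₁ i = h₂ ^ n * g₂ i) : h₁ = h₂ := by
  classical
  obtain ⟨a, b, ha, hb, hab⟩ := extract_gcd h₁ h₂
  have hc : gcd h₁ h₂ ≠ 0 := gcd_ne_zero_of_left hh₁.ne_zero
  generalize gcd h₁ h₂ = c at ha hb hc
  have hrel : IsRelPrime (a ^ n) (b ^ n) := (gcd_isUnit_iff_isRelPrime.mp hab).pow
  have hab_eq (i : ι) : a ^ n * g₁ i = b ^ n * g₂ i := by
    refine mul_left_cancel₀ (pow_ne_zero n hc) ?_
    rw [← mul_assoc, ← mul_assoc, ← mul_pow, ← mul_pow, ← ha, ← hb, heq]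
  have hau : IsUnit a := isUnit_of_forall_pow_dvd hg₂ (right_ne_zero_of_mul (ha ▸ hh₁.ne_zero))
    fun i ↦ hrel.dvd_of_dvd_mul_left ⟨g₁ i, (hab_eq i).symm⟩
  have hbu : IsUnit b := isUnit_of_forall_pow_dvd hg₁ (right_ne_zero_of_mul (hb ▸ hh₂.ne_zero))
    fun i ↦ hrel.symm.dvd_of_dvd_mul_left ⟨g₂ i, hab_eq i⟩
  refine eq_of_monic_of_associated hh₁ hh₂ ?_
  rw [ha, hb]
  exact (associated_mul_unit_right c a hau).symm.trans (associated_mul_unit_right c b hbu)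

variable (F ι) in
def monicTuples (e : ℕ) : Set (ι → F[X]) := {f | ∀ i, (f i).Monic ∧ (f i).natDegree = e}

lemma card_monicTuples [Finite ι] (e : ℕ) :
    Nat.card (monicTuples F ι e) = Nat.card F ^ (e * Nat.card ι) := by
  calc Nat.card (monicTuples F ι e)
      = Nat.card (ι → {p : F[X] // p.Monic ∧ p.natDegree = e}) :=
        Nat.card_congr <| Equiv.subtypePiEquivPi (p := fun _ (p : F[X]) ↦
          p.Monic ∧ p.natDegree = e)
    _ = Nat.card (ι → Fin e → F) :=
        Nat.card_congr <| (Equiv.refl ι).arrowCongr <|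
          (monicEquivDegreeLT e).trans (degreeLTEquiv F e).toEquiv
    _ = _ := by rw [Nat.card_fun, Nat.card_fun, Nat.card_fin, ← pow_mul]

noncomputable def powMul (n : ℕ) (x : F[X] × (ι → F[X])) (i : ι) : F[X] := x.1 ^ n * x.2 i

variable (F ι) in
def powDecomps (n e : ℕ) : Set (F[X] × (ι → F[X])) :=
  {x | x.1.Monic ∧ ¬HasCommonPowFactor n x.2 ∧
    ∀ i, (x.2 i).Monic ∧ n * x.1.natDegree + (x.2 i).natDegree = e}

lemma bijOn_powMul [Nonempty ι] (hn : n ≠ 0) :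
    Set.BijOn (powMul n) (powDecomps F ι n e) (monicTuples F ι e) := by
  refine ⟨?mapsTo, ?injOn, ?surjOn⟩
  case mapsTo =>
    rintro ⟨h, g⟩ ⟨hh, -, hg⟩ i
    refine ⟨(hh.pow n).mul (hg i).1, ?_⟩
    rw [powMul, natDegree_mul (pow_ne_zero n hh.ne_zero) (hg i).1.ne_zero, natDegree_pow,
      (hg i).2]
  case injOn =>
    rintro ⟨h₁, g₁⟩ ⟨hh₁, hg₁, -⟩ ⟨h₂, g₂⟩ ⟨hh₂, hg₂, -⟩ heq
    have heq' (i : ι) : h₁ ^ n * g₁ i = h₂ ^ n * g₂ i := congrFun heq i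
    obtain rfl := eq_of_forall_pow_mul_eq hh₁ hh₂ hg₁ hg₂ heq'
    exact Prod.ext rfl <| funext fun i ↦
      mul_left_cancel₀ (pow_ne_zero n hh₁.ne_zero) (heq' i)
  case surjOn =>
    intro f hf
    obtain ⟨h, g, hh, hg, hfg⟩ := exists_eq_monic_pow_mul hn (Classical.arbitrary ι) f
      (hf _).1.ne_zero
    have hgm (i : ι) : (g i).Monic := (hh.pow n).of_mul_monic_left (hfg i ▸ (hf i).1)
    refine ⟨(h, g), ⟨hh, hg, fun i ↦ ⟨hgm i, ?_⟩⟩, funext fun i ↦ (hfg i).symm⟩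
    rw [← (hf i).2, hfg i, natDegree_mul (pow_ne_zero n hh.ne_zero) (hgm i).ne_zero,
      natDegree_pow]

lemma bijOn_powMul_hasCommonPowFactor [Nonempty ι] (hn : n ≠ 0) :
    Set.BijOn (powMul n) (powDecomps F ι n e ∩ {x | x.1.Monic ∧ 1 ≤ x.1.natDegree})
      (monicTuples F ι e ∩ {f | HasCommonPowFactor n f}) := by
  refine (bijOn_powMul hn).inter_mapsTo ?_ ?_
  · rintro ⟨h, g⟩ ⟨hh, hdeg⟩
    exact ⟨h, hh, hdeg, fun i ↦ dvd_mul_right _ _⟩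
  · rintro ⟨h, g⟩ ⟨⟨hh, hg, -⟩, hf⟩
    refine ⟨hh, Nat.one_le_iff_ne_zero.mpr fun h0 ↦ hg ?_⟩
    obtain rfl := hh.natDegree_eq_zero.mp h0
    have hpow : powMul n (1, g) = g := funext fun i ↦ by rw [powMul, one_pow, one_mul]
    simpa only [Set.mem_preimage, hpow, Set.mem_ofPred_eq] using hf

lemma divX_mem_powDecomps {h : F[X]} {g : ι → F[X]} (hx : (h, g) ∈ powDecomps F ι n e)
    (hdeg : 1 ≤ h.natDegree) : (divX h, g) ∈ powDecomps F ι n (e - n) := by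
  obtain ⟨hh, hg, hgdeg⟩ := hx
  dsimp only at hgdeg
  refine ⟨hh.divX hdeg, hg, fun i ↦ ⟨(hgdeg i).1, ?_⟩⟩
  have := (hgdeg i).2
  have := Nat.le_mul_of_pos_right n hdeg
  show n * (divX h).natDegree + (g i).natDegree = e - n
  rw [natDegree_divX_eq_natDegree_tsub_one, Nat.mul_sub_one]
  omega

lemma mul_X_add_C_mem_powDecomps (hne : n ≤ e) {h : F[X]} {g : ι → F[X]}
    (hx : (h, g) ∈ powDecomps F ι n (e - n)) (c : F) :
    (h * X + C c, g) ∈ powDecomps F ι n e ∩ {x | x.1.Monic ∧ 1 ≤ x.1.natDegree} := by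
  obtain ⟨hh, hg, hgdeg⟩ := hx
  dsimp only at hh hgdeg ⊢
  refine ⟨⟨hh.mul_X_add_C c, hg, fun i ↦ ⟨(hgdeg i).1, ?_⟩⟩, hh.mul_X_add_C c, ?_⟩
  · have := (hgdeg i).2
    dsimp only
    rw [natDegree_mul_X_add_C hh.ne_zero, Nat.mul_succ]
    omega
  · rw [natDegree_mul_X_add_C hh.ne_zero]
    omega

noncomputable def powDecompsDivXEquiv (hne : n ≤ e) :
    ↥(powDecomps F ι n e ∩ {x | x.1.Monic ∧ 1 ≤ x.1.natDegree}) ≃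
      F × powDecomps F ι n (e - n) where
  toFun x := (x.1.1.coeff 0, ⟨(divX x.1.1, x.1.2), divX_mem_powDecomps x.2.1 x.2.2.2⟩)
  invFun y := ⟨(y.2.1.1 * X + C y.1, y.2.1.2), mul_X_add_C_mem_powDecomps hne y.2.2 y.1⟩
  left_inv x := Subtype.ext <| Prod.ext (divX_mul_X_add x.1.1) rfl
  right_inv y := Prod.ext (by simp) <| Subtype.ext <| Prod.ext (divX_mul_X_add_C _ _) rfl

end CommonPowFactor

theorem stmt_17 (F : Type) [Field F] [Fintype F] (q d n m : ℕ)
    (hq : Fintype.card F = q) (hn : 1 ≤ n) (hd : n ≤ d) (hm : 1 ≤ m) :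
    Nat.card {f : Fin m → Polynomial F //
      (∀ i, (f i).Monic ∧ (f i).natDegree = d) ∧
      ∃ h : Polynomial F, h.Monic ∧ 1 ≤ h.natDegree ∧ ∀ i, h ^ n ∣ f i} =
    q ^ ((d - n) * m + 1) := by
  subst hq
  have : Nonempty (Fin m) := ⟨⟨0, hm⟩⟩
  have hn0 : n ≠ 0 := Nat.one_le_iff_ne_zero.mp hn
  calc Nat.card ↥(monicTuples F (Fin m) d ∩ {f | HasCommonPowFactor n f})
      = Nat.card ↥(powDecomps F (Fin m) n d ∩ {x | x.1.Monic ∧ 1 ≤ x.1.natDegree}) :=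
        (Nat.card_congr ((bijOn_powMul_hasCommonPowFactor hn0).equiv _)).symm
    _ = Nat.card F * Nat.card (powDecomps F (Fin m) n (d - n)) := by
        rw [Nat.card_congr (powDecompsDivXEquiv hd), Nat.card_prod]
    _ = Nat.card F * Nat.card (monicTuples F (Fin m) (d - n)) := by
        rw [Nat.card_congr ((bijOn_powMul hn0).equiv _)]
    _ = _ := by
        rw [card_monicTuples, Nat.card_fin, Nat.card_eq_fintype_card, pow_succ']
end

section
/- For a finite field F_q and integers d ≥ n ≥ 1, m ≥ 1, k with 0 ≤ k ≤ ⌊d/n⌋, the set of m-tuples (f_1,...,f_m) of monic degree-d polynomials over F_q such that the maximal degree of a monic h with h^n | f_i for all i is exactly k is in bijection with Poly_n^{d−kn,m}(F_q) × F_q^k, via (f_1,...,f_m) ↦ ((f_1/h^n, ..., f_m/h^n), coefficients of h) where h is the maximal common n-th-power-root factor. -/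
/-!
Write `f i = g i * h ^ n` with `h` monic of degree `k`. Comparing root multiplicities over an
algebraically closed field shows that if the `g i` have no common root of multiplicity `≥ n`,
then every monic `h'` with `h' ^ n ∣ f i` for all `i` divides `h`; so `h` is the unique
maximal such polynomial. Conversely, if the `g i` share such a root `α`, then, `F` being perfect,
`α` is a simple root of its minimal polynomial `μ`, hence `μ ^ n ∣ g i`, and `h * μ` contradicts
the maximality of `h`. So `(g, h) ↦ g * h ^ n` is a bijection onto the stratum, and monic
polynomials of degree `k` are parametrised by their `k` lower coefficients.
-/

open Polynomial

namespace Polynomial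

section MonicOfCoeffs

variable {R : Type*} [Semiring R] {k : ℕ}

noncomputable def monicOfCoeffs (c : Fin k → R) : R[X] :=
  X ^ k + ((degreeLTEquiv R k).symm c : R[X])

theorem coeff_monicOfCoeffs (c : Fin k → R) (j : Fin k) : (monicOfCoeffs c).coeff j = c j := by
  rw [monicOfCoeffs, coeff_add, coeff_X_pow, if_neg j.isLt.ne, zero_add]
  exact congrFun ((degreeLTEquiv R k).apply_symm_apply c) j

variable [Nontrivial R]

theorem isMonicOfDegree_monicOfCoeffs (c : Fin k → R) : IsMonicOfDegree (monicOfCoeffs c) k := by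
  have hlt : ((degreeLTEquiv R k).symm c : R[X]).degree < k :=
    mem_degreeLT.1 ((degreeLTEquiv R k).symm c).2
  refine ⟨?_, monic_X_pow_add hlt⟩
  rw [monicOfCoeffs, natDegree_add_eq_left_of_degree_lt (by rwa [degree_X_pow]), natDegree_X_pow]

theorem monicOfCoeffs_coeff {p : R[X]} (hp : IsMonicOfDegree p k) :
    monicOfCoeffs (fun j : Fin k => p.coeff j) = p := by
  ext m
  rcases lt_or_ge m k with hm | hm
  · exact coeff_monicOfCoeffs _ ⟨m, hm⟩
  · exact (isMonicOfDegree_monicOfCoeffs _).coeff_eq hp hm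

variable (R k) in
noncomputable def monicEquivCoeffs : {p : R[X] // IsMonicOfDegree p k} ≃ (Fin k → R) where
  toFun p j := p.1.coeff j
  invFun c := ⟨monicOfCoeffs c, isMonicOfDegree_monicOfCoeffs c⟩
  left_inv p := Subtype.ext (monicOfCoeffs_coeff p.2)
  right_inv c := _root_.funext (coeff_monicOfCoeffs c)

end MonicOfCoeffs

theorem rootMultiplicity_pow {R : Type*} [CommRing R] [IsDomain R] (a : R) (p : R[X]) (n : ℕ) :
    rootMultiplicity a (p ^ n) = n * rootMultiplicity a p := by
  classical
  rw [← count_roots, roots_pow, Multiset.count_nsmul, count_roots]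

theorem dvd_of_pow_dvd_mul_pow {K ι : Type*} [Field K] [IsAlgClosed K] {n : ℕ} {a b : K[X]}
    {g : ι → K[X]} (ha : a ≠ 0) (hb : b ≠ 0) (hg : ∀ i, g i ≠ 0)
    (hroot : ∀ α, ∃ i, rootMultiplicity α (g i) < n) (hdvd : ∀ i, a ^ n ∣ g i * b ^ n) :
    a ∣ b := by
  classical
  refine (IsAlgClosed.splits a).dvd_of_roots_le_roots ha (Multiset.le_iff_count.2 fun α => ?_)
  rw [count_roots, count_roots]
  obtain ⟨i, hi⟩ := hroot α
  have hle := rootMultiplicity_le_rootMultiplicity_of_dvd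
    (mul_ne_zero (hg i) (pow_ne_zero n hb)) (hdvd i) α
  rw [rootMultiplicity_mul (mul_ne_zero (hg i) (pow_ne_zero n hb)), rootMultiplicity_pow,
    rootMultiplicity_pow] at hle
  have : n * rootMultiplicity α a < n * (rootMultiplicity α b + 1) := by linarith
  exact Nat.lt_succ_iff.1 (Nat.lt_of_mul_lt_mul_left this)

theorem pow_minpoly_dvd_of_pow_X_sub_C_dvd_map {F K : Type*} [Field F] [Field K] [Algebra F K]
    {α : K} (hα : IsSeparable F α) {g : F[X]} (hg : g ≠ 0) {n : ℕ}
    (hdvd : (X - C α) ^ n ∣ g.map (algebraMap F K)) : minpoly F α ^ n ∣ g := by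
  -- `g = μ ^ j * r` with `μ ∤ r`; as `α` is a simple root of `μ`, its multiplicity in `g` is `≤ j`.
  obtain ⟨j, r, hndvd, rfl⟩ := WfDvdMonoid.max_power_factor hg (minpoly.irreducible hα.isIntegral)
  have hr : ¬ (r.map (algebraMap F K)).IsRoot α := fun h =>
    hndvd (minpoly.dvd F α (by rwa [aeval_def, ← eval_map]))
  have hle := (le_rootMultiplicity_iff (map_ne_zero hg)).2 hdvd
  rw [Polynomial.map_mul, Polynomial.map_pow,
    rootMultiplicity_mul (by simpa using map_ne_zero (f := algebraMap F K) hg),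
    rootMultiplicity_pow, rootMultiplicity_eq_zero hr, add_zero] at hle
  have hsimple := rootMultiplicity_le_one_of_separable (Separable.map (f := algebraMap F K) hα) α
  exact (pow_dvd_pow _ (by nlinarith)).trans (dvd_mul_right _ _)

section CommonRoot

variable {F ι : Type*} [Field F] (K : Type*) [Field K] [Algebra F K]

def HasCommonNFoldRoot (n : ℕ) (g : ι → F[X]) : Prop :=
  ∃ α : K, ∀ i, (X - C α) ^ n ∣ (g i).map (algebraMap F K)

variable {K} {n : ℕ} {g : ι → F[X]}

theorem dvd_of_pow_dvd_mul_pow_of_not_hasCommonNFoldRoot [IsAlgClosed K] {h h' : F[X]}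
    (hh : h ≠ 0) (hh' : h' ≠ 0) (hg : ∀ i, g i ≠ 0) (hno : ¬ HasCommonNFoldRoot K n g)
    (hdvd : ∀ i, h' ^ n ∣ g i * h ^ n) : h' ∣ h := by
  have hroot : ∀ α : K, ∃ i, rootMultiplicity α ((g i).map (algebraMap F K)) < n := fun α => by
    by_contra! hall
    exact hno ⟨α, fun i => (le_rootMultiplicity_iff (map_ne_zero (hg i))).1 (hall i)⟩
  refine (map_dvd_map' (algebraMap F K)).1 <| dvd_of_pow_dvd_mul_pow (map_ne_zero hh')
    (map_ne_zero hh) (fun i => map_ne_zero (hg i)) hroot fun i => ?_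
  simpa only [Polynomial.map_mul, Polynomial.map_pow] using map_dvd (algebraMap F K) (hdvd i)

theorem not_hasCommonNFoldRoot_of_forall_natDegree_le [Algebra.IsSeparable F K] {h : F[X]}
    (hh : h.Monic) (hg : ∀ i, g i ≠ 0)
    (hmax : ∀ h' : F[X], h'.Monic → (∀ i, h' ^ n ∣ g i * h ^ n) → h'.natDegree ≤ h.natDegree) :
    ¬ HasCommonNFoldRoot K n g := by
  rintro ⟨α, hα⟩
  have hsep := Algebra.IsSeparable.isSeparable F α
  have hint := hsep.isIntegral
  have hle := hmax (h * minpoly F α) (hh.mul (minpoly.monic hint)) fun i => by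
    rw [mul_pow, mul_comm (g i)]
    exact mul_dvd_mul_left _ (pow_minpoly_dvd_of_pow_X_sub_C_dvd_map hsep (hg i) (hα i))
  rw [natDegree_mul hh.ne_zero (minpoly.ne_zero hint)] at hle
  have := minpoly.natDegree_pos hint
  omega

end CommonRoot

section PowerStratum

variable (F ι : Type*) [Field F] (n d k : ℕ)

/-- The paper's `Poly_n^{d,m}(F)`, with the `m` polynomials indexed by `ι`. -/
def polyNoCommonNFoldRoot : Set (ι → F[X]) :=
  {g | (∀ i, (g i).Monic ∧ (g i).natDegree = d) ∧
    ¬ HasCommonNFoldRoot (AlgebraicClosure F) n g}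

/-- The stratum `R_{n,k} - R_{n,k+1}`. -/
def powerStratum : Set (ι → F[X]) :=
  {f | (∀ i, (f i).Monic ∧ (f i).natDegree = d) ∧
    ∃ h : F[X], h.Monic ∧ h.natDegree = k ∧ (∀ i, h ^ n ∣ f i) ∧
      ∀ h' : F[X], h'.Monic → (∀ i, h' ^ n ∣ f i) → h'.natDegree ≤ k}

variable {F ι n d k}

theorem eq_of_pow_dvd_mul_pow {d' : ℕ} {g : ι → F[X]} (hg : g ∈ polyNoCommonNFoldRoot F ι n d')
    {p h : F[X]} (hp : IsMonicOfDegree p k) (hh : IsMonicOfDegree h k)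
    (hdvd : ∀ i, h ^ n ∣ g i * p ^ n) : h = p :=
  (eq_of_monic_of_dvd_of_natDegree_le hh.monic hp.monic
    (dvd_of_pow_dvd_mul_pow_of_not_hasCommonNFoldRoot hp.ne_zero hh.ne_zero
      (fun i => (hg.1 i).1.ne_zero) hg.2 hdvd)
    (hp.natDegree_eq.trans hh.natDegree_eq.symm).le).symm

theorem mul_pow_mem_powerStratum (hkn : k * n ≤ d) {g : ι → F[X]}
    (hg : g ∈ polyNoCommonNFoldRoot F ι n (d - k * n)) {p : F[X]} (hp : IsMonicOfDegree p k) :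
    (fun i => g i * p ^ n) ∈ powerStratum F ι n d k := by
  refine ⟨fun i => ?_, p, hp.monic, hp.natDegree_eq, fun i => dvd_mul_left _ _, ?_⟩
  · have := (IsMonicOfDegree.mk (hg.1 i).2 (hg.1 i).1).mul (hp.pow n)
    rw [Nat.sub_add_cancel hkn] at this
    exact ⟨this.monic, this.natDegree_eq⟩
  · intro h' hh' hdvd
    rw [← hp.natDegree_eq]
    exact natDegree_le_of_dvd (dvd_of_pow_dvd_mul_pow_of_not_hasCommonNFoldRoot hp.ne_zero
      hh'.ne_zero (fun i => (hg.1 i).1.ne_zero) hg.2 hdvd) hp.ne_zero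

theorem exists_mul_pow_eq_of_mem_powerStratum [PerfectField F] (hkn : k * n ≤ d) {f : ι → F[X]}
    (hf : f ∈ powerStratum F ι n d k) :
    ∃ g ∈ polyNoCommonNFoldRoot F ι n (d - k * n), ∃ p : F[X], IsMonicOfDegree p k ∧
      (fun i => g i * p ^ n) = f := by
  obtain ⟨hfd, h, hh, hhk, hdvd, hmax⟩ := hf
  choose g hg using hdvd
  obtain rfl : f = fun i => g i * h ^ n := _root_.funext fun i => (hg i).trans (mul_comm _ _)
  have hgd : ∀ i, IsMonicOfDegree (g i) (d - k * n) := fun i =>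
    IsMonicOfDegree.of_mul_right (IsMonicOfDegree.mk hhk hh |>.pow n)
      (by rw [Nat.sub_add_cancel hkn]; exact ⟨(hfd i).2, (hfd i).1⟩)
  refine ⟨g, ⟨fun i => ⟨(hgd i).monic, (hgd i).natDegree_eq⟩, ?_⟩, h, ⟨hhk, hh⟩, rfl⟩
  exact not_hasCommonNFoldRoot_of_forall_natDegree_le hh (fun i => (hgd i).ne_zero)
    (hhk ▸ hmax)

variable (F ι n) in
noncomputable def mulPowMap (hkn : k * n ≤ d) :
    polyNoCommonNFoldRoot F ι n (d - k * n) × {p : F[X] // IsMonicOfDegree p k} →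
      powerStratum F ι n d k :=
  fun x => ⟨fun i => x.1.1 i * x.2.1 ^ n, mul_pow_mem_powerStratum hkn x.1.2 x.2.2⟩

theorem mulPowMap_bijective [PerfectField F] (hkn : k * n ≤ d) :
    Function.Bijective (mulPowMap F ι n hkn) := by
  refine ⟨fun ⟨g, p⟩ ⟨g', p'⟩ heq => ?_, fun f => ?_⟩
  · have hfun : (fun i => g.1 i * p.1 ^ n) = fun i => g'.1 i * p'.1 ^ n := congrArg Subtype.val heq
    have hp : p = p' := Subtype.ext <| eq_of_pow_dvd_mul_pow g'.2 p'.2 p.2 fun i =>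
      congrFun hfun i ▸ dvd_mul_left _ _
    subst hp
    have hpn : p.1 ^ n ≠ 0 := pow_ne_zero n p.2.ne_zero
    exact Prod.ext (Subtype.ext <| _root_.funext fun i => mul_right_cancel₀ hpn (congrFun hfun i))
      rfl
  · obtain ⟨g, hg, p, hp, hf⟩ := exists_mul_pow_eq_of_mem_powerStratum hkn f.2
    exact ⟨(⟨g, hg⟩, ⟨p, hp⟩), Subtype.ext hf⟩

end PowerStratum

end Polynomial

theorem stmt_18_general (F : Type) [Field F] [Fintype F] (d n m k : ℕ) (hk : k ≤ d / n) :
    ∃ e : {f : Fin m → Polynomial F //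
        (∀ i, (f i).Monic ∧ (f i).natDegree = d) ∧
        ∃ h : Polynomial F, h.Monic ∧ h.natDegree = k ∧ (∀ i, h ^ n ∣ f i) ∧
          ∀ h' : Polynomial F, h'.Monic → (∀ i, h' ^ n ∣ f i) → h'.natDegree ≤ k} ≃
      {g : Fin m → Polynomial F //
        (∀ i, (g i).Monic ∧ (g i).natDegree = d - k * n) ∧
        ¬ ∃ α : AlgebraicClosure F, ∀ i,
          (X - C α) ^ n ∣ (g i).map (algebraMap F (AlgebraicClosure F))} × (Fin k → F),
      ∀ f (h : Polynomial F), h.Monic → h.natDegree = k → (∀ i, h ^ n ∣ f.1 i) →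
        (∀ i, ((e f).1.1 i) * h ^ n = f.1 i) ∧ ∀ j : Fin k, (e f).2 j = h.coeff j := by
  have hkn : k * n ≤ d := (Nat.mul_le_mul_right n hk).trans (Nat.div_mul_le_self d n)
  let e₀ := Equiv.ofBijective _ (mulPowMap_bijective (F := F) (ι := Fin m) hkn)
  refine ⟨e₀.symm.trans ((Equiv.refl _).prodCongr (monicEquivCoeffs F k)),
    fun f h hh hhk hdvd => ?_⟩
  have hf : mulPowMap F (Fin m) n hkn (e₀.symm f) = f := e₀.apply_symm_apply f
  rw [← hf] at hdvd
  obtain rfl : h = (e₀.symm f).2.1 :=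
    eq_of_pow_dvd_mul_pow (e₀.symm f).1.2 (e₀.symm f).2.2 ⟨hhk, hh⟩ hdvd
  exact ⟨fun i => congrFun (congrArg Subtype.val hf) i, fun j => rfl⟩

theorem stmt_18 (F : Type) [Field F] [Fintype F] (q d n m k : ℕ)
    (hq : Fintype.card F = q) (hn : 1 ≤ n) (hd : n ≤ d) (hm : 1 ≤ m) (hk : k ≤ d / n) :
    ∃ e : {f : Fin m → Polynomial F //
        (∀ i, (f i).Monic ∧ (f i).natDegree = d) ∧
        ∃ h : Polynomial F, h.Monic ∧ h.natDegree = k ∧ (∀ i, h ^ n ∣ f i) ∧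
          ∀ h' : Polynomial F, h'.Monic → (∀ i, h' ^ n ∣ f i) → h'.natDegree ≤ k} ≃
      {g : Fin m → Polynomial F //
        (∀ i, (g i).Monic ∧ (g i).natDegree = d - k * n) ∧
        ¬ ∃ α : AlgebraicClosure F, ∀ i,
          (X - C α) ^ n ∣ (g i).map (algebraMap F (AlgebraicClosure F))} × (Fin k → F),
      ∀ f (h : Polynomial F), h.Monic → h.natDegree = k → (∀ i, h ^ n ∣ f.1 i) →
        (∀ i, ((e f).1.1 i) * h ^ n = f.1 i) ∧ ∀ j : Fin k, (e f).2 j = h.coeff j :=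
  stmt_18_general F d n m k hk
end
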